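/- arXiv:1004.5105 — 2 statements merged into one kernel-verified Lean document; each statement's English description precedes it below -/
import Mathlib

section
/- If V ≥ δ > 0 on Ω and the symbol P₀(ξ) is bounded below on ℝⁿ, then there exists λ₀ ∈ ℝ such that for all φ ∈ C₀^∞(Ω), the quadratic form B_{λ₀}(φ,φ) = ⟨(1/V)(P₀−λ₀)φ, (P₀+V−λ₀)φ⟩_{L²} satisfies B_{λ₀}(φ,φ) ≥ (C₀/2)‖P₀φ‖²_{L²}, where C₀ = inf_Ω (1/V) > 0. -/
/-!
Shift by `λ₀ = -2C` and put `u = (P₀ + 2C) φ`. Since `W` is symmetric and inverts `V`, the form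
becomes `⟨W u, u⟩ + Re ⟨u, φ⟩ ≥ C₀ ‖u‖² + Re ⟨u, φ⟩`. Expanding in `p = Re ⟨P₀ φ, φ⟩ ≥ -C ‖φ‖²`,
the cross terms `(4 C₀ C + 1) p` are absorbed by the `(4 C₀ C² + 2C) ‖φ‖²` terms, leaving
`C₀ ‖P₀ φ‖² + C ‖φ‖²`.
-/

open RCLike

section InnerProduct

variable {𝕜 E : Type*} [RCLike 𝕜] [SeminormedAddCommGroup E] [InnerProductSpace 𝕜 E]

local notation "⟪" x ", " y "⟫" => inner 𝕜 x y

theorem re_inner_add_ofReal_smul_left (x y : E) (μ : ℝ) :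
    re ⟪x + (μ : 𝕜) • y, y⟫ = re ⟪x, y⟫ + μ * ‖y‖ ^ 2 := by
  rw [inner_add_left, inner_smul_left, inner_self_eq_norm_sq_to_K, conj_ofReal, map_add,
    ← ofReal_pow, ← ofReal_mul, ofReal_re]

theorem norm_add_ofReal_smul_sq (x y : E) (μ : ℝ) :
    ‖x + (μ : 𝕜) • y‖ ^ 2 = ‖x‖ ^ 2 + 2 * μ * re ⟪x, y⟫ + μ ^ 2 * ‖y‖ ^ 2 := by
  rw [@norm_add_sq 𝕜, inner_smul_right, re_ofReal_mul, norm_smul, norm_ofReal, mul_pow, sq_abs]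
  ring

theorem mul_norm_sq_le_of_neg_mul_norm_sq_le_re_inner {C₀ C : ℝ} (hC₀ : 0 ≤ C₀) (hC : 0 ≤ C) {x y : E}
    (hxy : -C * ‖y‖ ^ 2 ≤ re ⟪x, y⟫) :
    C₀ * ‖x‖ ^ 2 ≤
      C₀ * ‖x + ((2 * C : ℝ) : 𝕜) • y‖ ^ 2 + re ⟪x + ((2 * C : ℝ) : 𝕜) • y, y⟫ := by
  rw [norm_add_ofReal_smul_sq, re_inner_add_ofReal_smul_left]
  have hcross : (4 * C₀ * C + 1) * (-C * ‖y‖ ^ 2) ≤ (4 * C₀ * C + 1) * re ⟪x, y⟫ :=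
    mul_le_mul_of_nonneg_left hxy (by positivity)
  nlinarith [mul_nonneg hC (sq_nonneg ‖y‖)]

theorem mul_norm_sq_add_re_inner_le_re_inner {W V : E →ₗ[𝕜] E} {C₀ : ℝ}
    (hWsym : ∀ f g : E, ⟪W f, g⟫ = ⟪f, W g⟫) (hWV : ∀ f : E, W (V f) = f)
    (hWlow : ∀ f : E, C₀ * ‖f‖ ^ 2 ≤ re ⟪W f, f⟫) (u φ : E) :
    C₀ * ‖u‖ ^ 2 + re ⟪u, φ⟫ ≤ re ⟪W u, u + V φ⟫ := by
  rw [inner_add_right, hWsym u (V φ), hWV, map_add]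
  exact add_le_add_left (hWlow u) _

end InnerProduct

theorem stmt2 {E : Type*} [NormedAddCommGroup E] [InnerProductSpace ℂ E]
    (P₀ W V : E →ₗ[ℂ] E) (C₀ C : ℝ) (hC₀ : 0 < C₀) (hC : 0 ≤ C)
    (hWsym : ∀ f g : E, (inner ℂ (W f) g : ℂ) = inner ℂ f (W g))
    (hWV : ∀ f : E, W (V f) = f)
    (hWlow : ∀ f : E, C₀ * ‖f‖ ^ 2 ≤ (inner ℂ (W f) f : ℂ).re)
    (hPlow : ∀ f : E, -C * ‖f‖ ^ 2 ≤ (inner ℂ (P₀ f) f : ℂ).re) :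
    ∃ lam₀ : ℝ, ∀ φ : E,
      C₀ / 2 * ‖P₀ φ‖ ^ 2 ≤
        (inner ℂ (W (P₀ φ - (lam₀ : ℂ) • φ)) (P₀ φ + V φ - (lam₀ : ℂ) • φ) : ℂ).re := by
  refine ⟨-(2 * C), fun φ => ?_⟩
  set u := P₀ φ + ((2 * C : ℝ) : ℂ) • φ
  have hu : P₀ φ - ((-(2 * C) : ℝ) : ℂ) • φ = u := by push_cast; module
  have huV : P₀ φ + V φ - ((-(2 * C) : ℝ) : ℂ) • φ = u + V φ := by push_cast; module
  rw [hu, huV]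
  calc C₀ / 2 * ‖P₀ φ‖ ^ 2 ≤ C₀ * ‖P₀ φ‖ ^ 2 := by
        linarith [mul_nonneg hC₀.le (sq_nonneg ‖P₀ φ‖)]
    _ ≤ C₀ * ‖u‖ ^ 2 + (inner ℂ u φ).re := mul_norm_sq_le_of_neg_mul_norm_sq_le_re_inner hC₀.le hC (hPlow φ)
    _ ≤ (inner ℂ (W u) (u + V φ)).re := mul_norm_sq_add_re_inner_le_re_inner hWsym hWV hWlow u φ
end

section
/- Let V ≥ δ > 0 on Ω. If u ∈ H₀^{P₀}(Ω) is nonzero with δ ≥ 2‖P₀u‖/‖u‖, then choosing λ = δ/2 gives B_λ(u,u) ≤ (1/δ)‖P₀u‖² − (δ/4)‖u‖² ≤ 0, where B_λ(u,u) = ⟨(1/V)(P₀−λ)u, (P₀+V−λ)u⟩. -/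
/-!
Write `x = P₀ u` and `f = x - c • u`. Symmetry of `W` and `W ∘ V = id` turn `re ⟪W f, f + V u⟫` into
`re ⟪W f, f⟫ + re ⟪f, u⟫`, and the upper bound on `W` bounds the first term by `‖f‖² / δ`.
Expanding in `c`, the cross terms `re ⟪x, u⟫` carry the coefficients `-2c/δ` and `1`, which
cancel exactly at `c = δ/2`, leaving `‖x‖² / δ - (δ/4) ‖u‖²`.
-/

open RCLike
open scoped InnerProductSpace

section
variable {𝕜 E : Type*} [RCLike 𝕜] [NormedAddCommGroup E] [InnerProductSpace 𝕜 E]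

theorem norm_sub_ofReal_smul_sq (x y : E) (c : ℝ) :
    ‖x - (c : 𝕜) • y‖ ^ 2 = ‖x‖ ^ 2 - 2 * c * re ⟪x, y⟫_𝕜 + c ^ 2 * ‖y‖ ^ 2 := by
  rw [@norm_sub_sq 𝕜, inner_smul_right, re_ofReal_mul, norm_smul, norm_ofReal, mul_pow, sq_abs]
  ring

theorem re_inner_sub_ofReal_smul_left (x y : E) (c : ℝ) :
    re ⟪x - (c : 𝕜) • y, y⟫_𝕜 = re ⟪x, y⟫_𝕜 - c * ‖y‖ ^ 2 := by
  rw [inner_sub_left, inner_smul_left, conj_ofReal, map_sub, re_ofReal_mul,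
    inner_self_eq_norm_sq]

theorem re_inner_add_of_leftInverse {W V : E →ₗ[𝕜] E} (hWsym : ∀ f g, ⟪W f, g⟫_𝕜 = ⟪f, W g⟫_𝕜)
    (hWV : ∀ f, W (V f) = f) (f u : E) :
    re ⟪W f, f + V u⟫_𝕜 = re ⟪W f, f⟫_𝕜 + re ⟪f, u⟫_𝕜 := by
  rw [inner_add_right, hWsym f (V u), hWV, map_add]

theorem re_inner_sub_ofReal_smul_le {W V : E →ₗ[𝕜] E} {δ : ℝ} (hδ : 0 < δ)
    (hWsym : ∀ f g, ⟪W f, g⟫_𝕜 = ⟪f, W g⟫_𝕜) (hWV : ∀ f, W (V f) = f)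
    (hWup : ∀ f, re ⟪W f, f⟫_𝕜 ≤ 1 / δ * ‖f‖ ^ 2) (x u : E) (c : ℝ) :
    re ⟪W (x - (c : 𝕜) • u), x + V u - (c : 𝕜) • u⟫_𝕜 ≤
      1 / δ * ‖x‖ ^ 2 - 2 * c / δ * re ⟪x, u⟫_𝕜 + c ^ 2 / δ * ‖u‖ ^ 2
        + re ⟪x, u⟫_𝕜 - c * ‖u‖ ^ 2 := by
  have hsplit : x + V u - (c : 𝕜) • u = (x - (c : 𝕜) • u) + V u := by abel
  have hexpand := norm_sub_ofReal_smul_sq (𝕜 := 𝕜) x u c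
  calc re ⟪W (x - (c : 𝕜) • u), x + V u - (c : 𝕜) • u⟫_𝕜
      = re ⟪W (x - (c : 𝕜) • u), x - (c : 𝕜) • u⟫_𝕜 + re ⟪x - (c : 𝕜) • u, u⟫_𝕜 := by
        rw [hsplit, re_inner_add_of_leftInverse hWsym hWV]
    _ ≤ 1 / δ * ‖x - (c : 𝕜) • u‖ ^ 2 + re ⟪x - (c : 𝕜) • u, u⟫_𝕜 := by
        gcongr; exact hWup _
    _ = _ := by
        rw [hexpand, re_inner_sub_ofReal_smul_left]
        field_simp
        ring
end

theorem inv_mul_sq_sub_le_zero {a b δ : ℝ} (hδ : 0 < δ) (ha : 0 ≤ a) (hab : 2 * a ≤ δ * b) :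
    1 / δ * a ^ 2 - δ / 4 * b ^ 2 ≤ 0 := by
  rw [sub_nonpos, one_div, inv_mul_le_iff₀ hδ]
  nlinarith

theorem stmt6_general {E : Type*} [NormedAddCommGroup E] [InnerProductSpace ℂ E]
    (P₀ W V : E →ₗ[ℂ] E) (δ : ℝ) (hδ : 0 < δ)
    (hWsym : ∀ f g : E, (inner ℂ (W f) g : ℂ) = inner ℂ f (W g))
    (hWV : ∀ f : E, W (V f) = f)
    (hWup : ∀ f : E, (inner ℂ (W f) f : ℂ).re ≤ 1 / δ * ‖f‖ ^ 2)
    (u : E) (hu : u ≠ 0) (hsmall : δ ≥ 2 * ‖P₀ u‖ / ‖u‖) :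
    (inner ℂ (W (P₀ u - ((δ / 2 : ℝ) : ℂ) • u))
        (P₀ u + V u - ((δ / 2 : ℝ) : ℂ) • u) : ℂ).re
      ≤ 1 / δ * ‖P₀ u‖ ^ 2 - δ / 4 * ‖u‖ ^ 2 ∧
    1 / δ * ‖P₀ u‖ ^ 2 - δ / 4 * ‖u‖ ^ 2 ≤ 0 := by
  refine ⟨?_, inv_mul_sq_sub_le_zero hδ (norm_nonneg _) ?_⟩
  · refine (re_inner_sub_ofReal_smul_le hδ hWsym hWV hWup (P₀ u) u (δ / 2)).trans_eq ?_
    field_simp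
    ring
  · rwa [ge_iff_le, div_le_iff₀ (norm_pos_iff.mpr hu)] at hsmall

theorem stmt6 {E : Type*} [NormedAddCommGroup E] [InnerProductSpace ℂ E]
    (P₀ W V : E →ₗ[ℂ] E) (δ : ℝ) (hδ : 0 < δ)
    (hWsym : ∀ f g : E, (inner ℂ (W f) g : ℂ) = inner ℂ f (W g))
    (hWV : ∀ f : E, W (V f) = f)
    (hWup : ∀ f : E, (inner ℂ (W f) f : ℂ).re ≤ 1 / δ * ‖f‖ ^ 2)
    (hPreal : ∀ f : E, (inner ℂ (P₀ f) f : ℂ).im = 0)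
    (u : E) (hu : u ≠ 0) (hsmall : δ ≥ 2 * ‖P₀ u‖ / ‖u‖) :
    (inner ℂ (W (P₀ u - ((δ / 2 : ℝ) : ℂ) • u))
        (P₀ u + V u - ((δ / 2 : ℝ) : ℂ) • u) : ℂ).re
      ≤ 1 / δ * ‖P₀ u‖ ^ 2 - δ / 4 * ‖u‖ ^ 2 ∧
    1 / δ * ‖P₀ u‖ ^ 2 - δ / 4 * ‖u‖ ^ 2 ≤ 0 :=
  stmt6_general P₀ W V δ hδ hWsym hWV hWup u hu hsmall
end
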